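/- The Lie algebra sp(Cl(1,3)) = iCl^R_1(1,3) ⊕ Cl^R_2(1,3) is isomorphic as a real Lie algebra to sp(4,ℝ) = {u ∈ Mat(4,ℝ) : uᵀJ = −Ju}, where J = [[0,−I₂],[I₂,0]]. -/

import Mathlib

open CliffordAlgebra

noncomputable def Q13 : QuadraticForm ℂ (Fin 4 → ℂ) :=
  QuadraticMap.weightedSumSquares ℂ (fun a : Fin 4 => if a = 0 then (1 : ℂ) else -1)

noncomputable def e (a : Fin 4) : CliffordAlgebra Q13 := ι Q13 (Pi.single a 1)

noncomputable def blade (s : Finset (Fin 4)) : CliffordAlgebra Q13 :=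
  ((s.sort (· ≤ ·)).map e).prod

/-- The real subspace sp(Cl(1,3)) = iCl^ℝ_1(1,3) ⊕ Cl^ℝ_2(1,3). -/
noncomputable def spCl : Submodule ℝ (CliffordAlgebra Q13) :=
  Submodule.span ℝ
    (((fun x => (Complex.I : ℂ) • x) '' (blade '' {s | s.card = 1})) ∪
      (blade '' {s | s.card = 2}))

/-- The symplectic matrix J = [[0,−I₂],[I₂,0]]. -/
def Jmat : Matrix (Fin 4) (Fin 4) ℝ :=
  !![0,0,-1,0; 0,0,0,-1; 1,0,0,0; 0,1,0,0]

/-- The symplectic Lie algebra sp(4,ℝ) = {u : uᵀJ = −Ju}. -/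
def spMat : Set (Matrix (Fin 4) (Fin 4) ℝ) :=
  {u | u.transpose * Jmat = -(Jmat * u)}

/-!
`Cl(1,3)` has a Majorana representation: its Clifford relations are realised by purely
imaginary matrices `i γₐ` with `γₐ` integral. It sends `i eₐ ↦ -γₐ` and `eₐ e_b ↦ -γₐ γ_b`,
so it is real on `iCl^ℝ₁ ⊕ Cl^ℝ₂`, and its real part is a real linear map that turns the
Clifford commutator into the matrix commutator. The `γₐ` are `J`-skew for `J = γ₀`, hence so
are their anticommuting products `γₐ γ_b`. These ten matrices are orthogonal for the trace
form `(X, Y) ↦ tr (X Y)` with nonzero norms, hence linearly independent, and their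
trace-form coordinates express every element of `sp(4,ℝ)` in terms of them.
-/

open Matrix

open Finset in
theorem sum_smul_mul_self_of_anticomm {ι K A : Type*} [Fintype ι] [CommRing K] [Ring A]
    [Algebra K A] {G : ι → A} {η : ι → K} (hsq : ∀ a, G a * G a = algebraMap K A (η a))
    (hanti : ∀ a b, a ≠ b → G a * G b = -(G b * G a)) (v : ι → K) :
    (∑ a, v a • G a) * (∑ a, v a • G a) = algebraMap K A (∑ a, η a * (v a * v a)) := by
  classical
  set F : ι × ι → A := fun p => (v p.1 * v p.2) • (G p.1 * G p.2)
  have hoff : ∑ p ∈ univ.offDiag, F p = 0 := by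
    refine sum_involution (fun p _ => p.swap) (fun p hp => ?_) (fun p hp _ => ?_)
      (fun p hp => by simpa [and_comm, eq_comm] using hp) (fun p _ => p.swap_swap)
    · rw [mem_offDiag] at hp
      simp only [F, Prod.fst_swap, Prod.snd_swap, hanti _ _ hp.2.2, mul_comm (v p.2), smul_neg,
        neg_add_cancel]
    · exact fun h => (mem_offDiag.1 hp).2.2 (congrArg Prod.fst h).symm
  calc (∑ a, v a • G a) * (∑ a, v a • G a) = ∑ p ∈ univ ×ˢ univ, F p := by
        simp only [sum_mul_sum, sum_product, F, smul_mul_smul_comm]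
    _ = ∑ a, F (a, a) := by
        rw [← diag_union_offDiag, sum_union (disjoint_diag_offDiag _), hoff, add_zero, sum_diag]
    _ = algebraMap K A (∑ a, η a * (v a * v a)) := by
        simp only [F, hsq, Algebra.smul_def, ← map_mul, map_sum, mul_comm (η _)]

theorem Matrix.linearIndependent_of_trace_mul {K n ι : Type*} [Field K] [Fintype n]
    {m : ι → Matrix n n K} (h₀ : ∀ i j, i ≠ j → trace (m i * m j) = 0)
    (h₁ : ∀ i, trace (m i * m i) ≠ 0) : LinearIndependent K m :=
  LinearMap.BilinForm.linearIndependent_of_iIsOrtho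
    (B := (LinearMap.mul K (Matrix n n K)).compr₂ (traceLinearMap n K K)) h₀ h₁

theorem LinearMap.bijOn_span_range {R M N ι : Type*} [Semiring R] [AddCommMonoid M]
    [AddCommMonoid N] [Module R M] [Module R N] (f : M →ₗ[R] N) {v : ι → M}
    (hv : LinearIndependent R (f ∘ v)) :
    Set.BijOn f (Submodule.span R (Set.range v)) (Submodule.span R (Set.range (f ∘ v))) := by
  have hinj : Set.InjOn f (Submodule.span R (Set.range v)) := by
    simp only [← Finsupp.range_linearCombination, LinearMap.coe_range]
    rintro _ ⟨a, rfl⟩ _ ⟨b, rfl⟩ h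
    rw [Finsupp.apply_linearCombination, Finsupp.apply_linearCombination] at h
    rw [hv h]
  simpa only [← Submodule.map_coe, Submodule.map_span, ← Set.range_comp] using hinj.bijOn_image

section Complexification

variable {n : Type*} [Fintype n] [DecidableEq n]

noncomputable abbrev ofRealMatrix : Matrix n n ℝ →ₐ[ℝ] Matrix n n ℂ := (Algebra.ofId ℝ ℂ).mapMatrix

noncomputable abbrev reMatrix : Matrix n n ℂ →ₗ[ℝ] Matrix n n ℝ := Complex.reLm.mapMatrix

theorem reMatrix_ofRealMatrix (X : Matrix n n ℝ) : reMatrix (ofRealMatrix X) = X := by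
  ext i j
  simp

theorem ofRealMatrix_mapMatrix_intCast (X : Matrix n n ℤ) :
    ofRealMatrix ((Int.castRingHom ℝ).mapMatrix X) = (Int.castRingHom ℂ).mapMatrix X := by
  ext i j
  simp

theorem reMatrix_commutator {A : Type*} [Ring A] [Algebra ℂ A] (ρ : A →ₐ[ℂ] Matrix n n ℂ)
    {u v : A} {X Y : Matrix n n ℝ} (hu : ρ u = ofRealMatrix X) (hv : ρ v = ofRealMatrix Y) :
    reMatrix (ρ (u * v - v * u)) = X * Y - Y * X := by
  rw [map_sub, map_mul, map_mul, hu, hv, ← map_mul, ← map_mul, ← map_sub, reMatrix_ofRealMatrix]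

end Complexification

namespace Majorana

/-- Integral generators of `Cl(3,1) ≅ Mat(4,ℝ)`, so that the purely imaginary `i γₐ` are
Majorana gamma matrices for `Cl(1,3)`. -/
def γ : Fin 4 → Matrix (Fin 4) (Fin 4) ℤ :=
  ![!![0,0,-1,0; 0,0,0,-1; 1,0,0,0; 0,1,0,0],
    !![0,0,0,1; 0,0,1,0; 0,1,0,0; 1,0,0,0],
    !![0,0,-1,0; 0,0,0,1; -1,0,0,0; 0,1,0,0],
    !![1,0,0,0; 0,1,0,0; 0,0,-1,0; 0,0,0,-1]]

theorem γ_mul_self : ∀ a, γ a * γ a = if a = 0 then -1 else 1 := by decide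

theorem γ_anticomm : ∀ a b, a ≠ b → γ a * γ b = -(γ b * γ a) := by decide

noncomputable def iγ (a : Fin 4) : Matrix (Fin 4) (Fin 4) ℂ :=
  Complex.I • (Int.castRingHom ℂ).mapMatrix (γ a)

theorem iγ_mul_self (a : Fin 4) :
    iγ a * iγ a = algebraMap ℂ _ (if a = 0 then 1 else -1) := by
  rw [iγ, smul_mul_smul_comm, ← map_mul, γ_mul_self, Complex.I_mul_I]
  split_ifs <;> simp [-RingHom.mapMatrix_apply, Algebra.algebraMap_eq_smul_one]

theorem iγ_anticomm {a b : Fin 4} (h : a ≠ b) :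
    iγ a * iγ b = -(iγ b * iγ a) := by
  rw [iγ, iγ, smul_mul_smul_comm, smul_mul_smul_comm, ← map_mul, ← map_mul,
    γ_anticomm a b h, map_neg, smul_neg]

noncomputable def rep : CliffordAlgebra Q13 →ₐ[ℂ] Matrix (Fin 4) (Fin 4) ℂ :=
  CliffordAlgebra.lift Q13 ⟨Fintype.linearCombination ℂ iγ, fun v => by
    rw [Fintype.linearCombination_apply, Q13, QuadraticMap.weightedSumSquares_apply]
    exact sum_smul_mul_self_of_anticomm iγ_mul_self (fun a b => iγ_anticomm) v⟩

theorem rep_e (a : Fin 4) : rep (e a) = iγ a := by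
  rw [rep, e, CliffordAlgebra.lift_ι_apply, Fintype.linearCombination_apply_single, one_smul]

theorem rep_I_smul_e (a : Fin 4) :
    rep (Complex.I • e a) = (Int.castRingHom ℂ).mapMatrix (-γ a) := by
  rw [map_smul, rep_e, iγ, smul_smul, Complex.I_mul_I, neg_one_smul, map_neg]

theorem rep_e_mul_e (a b : Fin 4) :
    rep (e a * e b) = (Int.castRingHom ℂ).mapMatrix (-(γ a * γ b)) := by
  rw [map_mul, rep_e, rep_e, iγ, iγ, smul_mul_smul_comm, Complex.I_mul_I, neg_one_smul,
    map_neg, map_mul]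

noncomputable def realRep : CliffordAlgebra Q13 →ₗ[ℝ] Matrix (Fin 4) (Fin 4) ℝ :=
  reMatrix ∘ₗ rep.toLinearMap.restrictScalars ℝ

end Majorana

open Majorana

theorem blade_singleton (a : Fin 4) : blade {a} = e a := by
  simp [blade, Finset.sort_singleton]

theorem blade_pair {a b : Fin 4} (hab : a < b) : blade {a, b} = e a * e b := by
  rw [blade, Finset.sort_insert _ (by simpa using hab.le) (by simpa using hab.ne),
    Finset.sort_singleton]
  simp

noncomputable def gen : Fin 10 → CliffordAlgebra Q13 :=
  ![Complex.I • e 0, Complex.I • e 1, Complex.I • e 2, Complex.I • e 3,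
    e 0 * e 1, e 0 * e 2, e 0 * e 3, e 1 * e 2, e 1 * e 3, e 2 * e 3]

theorem spCl_eq_span_gen : spCl = Submodule.span ℝ (Set.range gen) := by
  have h1 : {s : Finset (Fin 4) | s.card = 1} = {{0}, {1}, {2}, {3}} := by
    ext s
    simpa using congrArg (s ∈ ·)
      (by decide : Finset.univ.filter (fun s : Finset (Fin 4) => s.card = 1) = {{0}, {1}, {2}, {3}})
  have h2 : {s : Finset (Fin 4) | s.card = 2} =
      {{0, 1}, {0, 2}, {0, 3}, {1, 2}, {1, 3}, {2, 3}} := by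
    ext s
    simpa using congrArg (s ∈ ·)
      (by decide : Finset.univ.filter (fun s : Finset (Fin 4) => s.card = 2) =
        {{0, 1}, {0, 2}, {0, 3}, {1, 2}, {1, 3}, {2, 3}})
  rw [spCl, h1, h2]
  congr 1
  ext x
  simp only [Fin.isValue, Set.image_insert_eq, blade_singleton, Set.image_singleton, zero_lt_one,
    blade_pair, Fin.reduceLT, Set.union_insert, Set.union_singleton, Set.mem_insert_iff,
    Set.mem_singleton_iff, gen, range_cons, range_empty, Set.union_empty]
  tauto

def genMat : Fin 10 → Matrix (Fin 4) (Fin 4) ℤ :=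
  ![-γ 0, -γ 1, -γ 2, -γ 3,
    -(γ 0 * γ 1), -(γ 0 * γ 2), -(γ 0 * γ 3), -(γ 1 * γ 2), -(γ 1 * γ 3), -(γ 2 * γ 3)]

theorem rep_gen (i : Fin 10) : rep (gen i) = (Int.castRingHom ℂ).mapMatrix (genMat i) := by
  fin_cases i <;> first | exact rep_I_smul_e _ | exact rep_e_mul_e _ _

theorem realRep_gen (i : Fin 10) : realRep (gen i) = (Int.castRingHom ℝ).mapMatrix (genMat i) := by
  rw [realRep, LinearMap.comp_apply, LinearMap.restrictScalars_apply, AlgHom.toLinearMap_apply,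
    rep_gen, ← ofRealMatrix_mapMatrix_intCast, reMatrix_ofRealMatrix]

theorem rep_eq_ofRealMatrix_realRep {x : CliffordAlgebra Q13} (hx : x ∈ spCl) :
    rep x = ofRealMatrix (realRep x) := by
  have hle : spCl ≤ LinearMap.eqLocus (rep.toLinearMap.restrictScalars ℝ)
      (ofRealMatrix.toLinearMap ∘ₗ realRep) := by
    rw [spCl_eq_span_gen, Submodule.span_le, Set.range_subset_iff]
    intro i
    rw [SetLike.mem_coe, LinearMap.mem_eqLocus, LinearMap.comp_apply, realRep_gen,
      LinearMap.restrictScalars_apply, AlgHom.toLinearMap_apply, AlgHom.toLinearMap_apply,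
      ofRealMatrix_mapMatrix_intCast, rep_gen]
  exact hle hx

theorem trace_genMat_mul_of_ne : ∀ i j, i ≠ j → trace (genMat i * genMat j) = 0 := by decide

theorem trace_genMat_mul_self_ne_zero : ∀ i, trace (genMat i * genMat i) ≠ 0 := by decide

theorem linearIndependent_realRep_gen : LinearIndependent ℝ (realRep ∘ gen) := by
  have htrace (i j : Fin 10) : trace (realRep (gen i) * realRep (gen j)) =
      ((trace (genMat i * genMat j) : ℤ) : ℝ) := by
    rw [realRep_gen, realRep_gen, ← map_mul, RingHom.mapMatrix_apply,
      ← AddMonoidHom.map_trace (Int.castRingHom ℝ)]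
    rfl
  refine Matrix.linearIndependent_of_trace_mul (fun i j hij => ?_) (fun i => ?_)
  · rw [Function.comp_apply, Function.comp_apply, htrace, trace_genMat_mul_of_ne i j hij,
      Int.cast_zero]
  · rw [Function.comp_apply, htrace, Int.cast_ne_zero]
    exact trace_genMat_mul_self_ne_zero i

theorem Jmat_eq : Jmat = (Int.castRingHom ℝ).mapMatrix (γ 0) := by
  ext i j
  fin_cases i <;> fin_cases j <;> simp [Jmat, γ]

theorem genMat_transpose_mul : ∀ i, (genMat i)ᵀ * γ 0 = -(γ 0 * genMat i) := by decide

theorem genMat_mem_spMat (i : Fin 10) : (Int.castRingHom ℝ).mapMatrix (genMat i) ∈ spMat := by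
  change ((Int.castRingHom ℝ).mapMatrix (genMat i))ᵀ * Jmat = -(Jmat * _)
  have ht : ((Int.castRingHom ℝ).mapMatrix (genMat i))ᵀ =
      (Int.castRingHom ℝ).mapMatrix (genMat i)ᵀ := Matrix.transpose_map.symm
  rw [Jmat_eq, ht, ← map_mul, ← map_mul, ← map_neg, genMat_transpose_mul]

theorem entries_of_mem_spMat {u : Matrix (Fin 4) (Fin 4) ℝ} (hu : u ∈ spMat) :
    u 3 0 = u 2 1 ∧ u 2 2 = -u 0 0 ∧ u 2 3 = -u 1 0 ∧ u 3 2 = -u 0 1 ∧ u 3 3 = -u 1 1 ∧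
      u 1 2 = u 0 3 := by
  change uᵀ * Jmat = -(Jmat * u) at hu
  have h01 := congrFun₂ hu 0 1
  have h02 := congrFun₂ hu 0 2
  have h03 := congrFun₂ hu 0 3
  have h12 := congrFun₂ hu 1 2
  have h13 := congrFun₂ hu 1 3
  have h23 := congrFun₂ hu 2 3
  simp [Jmat, Matrix.mul_apply, Fin.sum_univ_four, vecMul, dotProduct] at h01 h02 h03 h12 h13 h23
  refine ⟨?_, ?_, ?_, ?_, ?_, ?_⟩ <;> linarith

theorem mem_span_genMat {u : Matrix (Fin 4) (Fin 4) ℝ} (hu : u ∈ spMat) :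
    u ∈ Submodule.span ℝ (Set.range ((Int.castRingHom ℝ).mapMatrix ∘ genMat)) := by
  obtain ⟨h30, h22, h23, h32, h33, h12⟩ := entries_of_mem_spMat hu
  rw [Submodule.mem_span_range_iff_exists_fun]
  -- the coordinates `tr (u mᵢ) / tr (mᵢ mᵢ)` for the trace-orthogonal `mᵢ`, simplified by the
  -- relations above
  refine ⟨![(u 0 2 + u 1 3 - u 2 0 - u 3 1) / 4, -(u 0 3 + u 2 1) / 2,
    (u 0 2 - u 1 3 + u 2 0 - u 3 1) / 4, -(u 0 0 + u 1 1) / 2, (u 0 1 + u 1 0) / 2,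
    (u 1 1 - u 0 0) / 2, -(u 0 2 + u 1 3 + u 2 0 + u 3 1) / 4, (u 1 0 - u 0 1) / 2,
    (u 0 3 - u 2 1) / 2, (u 1 3 - u 0 2 + u 2 0 - u 3 1) / 4], ?_⟩
  ext p q
  fin_cases p <;> fin_cases q <;>
  · simp [Matrix.sum_apply, Fin.sum_univ_succ, genMat, γ]
    linarith

theorem coe_span_realRep_gen :
    (Submodule.span ℝ (Set.range (realRep ∘ gen)) : Set (Matrix (Fin 4) (Fin 4) ℝ)) = spMat := by
  have hsp : (skewAdjointMatricesSubmodule Jmat : Set (Matrix (Fin 4) (Fin 4) ℝ)) = spMat := by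
    ext u
    simp [spMat, Matrix.IsSkewAdjoint, Matrix.IsAdjointPair]
  rw [show realRep ∘ gen = (Int.castRingHom ℝ).mapMatrix ∘ genMat from funext realRep_gen]
  refine subset_antisymm ?_ fun u hu => mem_span_genMat hu
  rw [← hsp, SetLike.coe_subset_coe, Submodule.span_le, hsp, Set.range_subset_iff]
  exact genMat_mem_spMat

/-- The Lie algebra sp(Cl(1,3)) is isomorphic, as a real Lie algebra,
to the matrix Lie algebra sp(4,ℝ). -/
theorem spCl_iso_sp4 :
    ∃ f : CliffordAlgebra Q13 →ₗ[ℝ] Matrix (Fin 4) (Fin 4) ℝ,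
      Set.BijOn f (spCl : Set (CliffordAlgebra Q13)) spMat ∧
      ∀ u ∈ spCl, ∀ v ∈ spCl, f (u * v - v * u) = f u * f v - f v * f u := by
  refine ⟨realRep, ?_, fun u hu v hv => ?_⟩
  · rw [← coe_span_realRep_gen, spCl_eq_span_gen]
    exact realRep.bijOn_span_range linearIndependent_realRep_gen
  · exact reMatrix_commutator rep (rep_eq_ofRealMatrix_realRep hu) (rep_eq_ofRealMatrix_realRep hv)
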